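/- For h ∈ ℕ: (i) for every k ∈ ℕ the odd symplectic spinor s_{o,k}^h = Σ_{p=0}^{h} √((2k+2p)!!/(2k+2p+1)!!) binom(h,p) ψ_{2k+2p+1}(q) z̄^{h−p} z^p satisfies D_s s_{o,k}^h = 0; (ii) for every k ∈ ℕ the even symplectic spinor s_{e,k}^h = Σ_{p=0}^{h} √((2k+2p−1)!!/(2k+2p)!!) binom(h,p) ψ_{2k+2p}(q) z̄^{h−p} z^p satisfies D_s s_{e,k}^h = 0; (iii) for every integer k with −h ≤ k ≤ −1, the even symplectic spinor s_{e,k}^h = Σ_{p=|k|}^{h} √((2k+2p−1)!!/(2k+2p)!!) binom(h,p) ψ_{2k+2p}(q) z̄^{h−p} z^p satisfies D_s s_{e,k}^h = 0. -/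

import Mathlib

noncomputable section

open Complex Finset

/-- Points `(x, y, q)` of `ℝ³`. -/
abbrev P3 := ℝ × ℝ × ℝ

/-- Partial derivative with respect to `x`. -/
def pdx (f : P3 → ℂ) : P3 → ℂ := fun p => deriv (fun t => f (t, p.2.1, p.2.2)) p.1

/-- Partial derivative with respect to `y`. -/
def pdy (f : P3 → ℂ) : P3 → ℂ := fun p => deriv (fun t => f (p.1, t, p.2.2)) p.2.1

/-- Partial derivative with respect to `q`. -/
def pdq (f : P3 → ℂ) : P3 → ℂ := fun p => deriv (fun t => f (p.1, p.2.1, t)) p.2.2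

/-- The symplectic Dirac operator `D_s f = i q ∂_y f − ∂_x ∂_q f`. -/
def Ds (f : P3 → ℂ) : P3 → ℂ := fun p =>
  Complex.I * (p.2.2 : ℂ) * pdy f p - pdx (pdq f) p

/-- The operator `X_s f = y ∂_q f + i x q f`. -/
def Xs (f : P3 → ℂ) : P3 → ℂ := fun p =>
  (p.2.1 : ℂ) * pdq f p + Complex.I * (p.1 : ℂ) * (p.2.2 : ℂ) * f p

/-- The Euler operator `E f = x ∂_x f + y ∂_y f`. -/
def Eul (f : P3 → ℂ) : P3 → ℂ := fun p =>
  (p.1 : ℂ) * pdx f p + (p.2.1 : ℂ) * pdy f p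

/-- The complex coordinate `z = x + iy`. -/
def zc (r : P3) : ℂ := (r.1 : ℂ) + Complex.I * (r.2.1 : ℂ)

/-- The complex coordinate `z̄ = x − iy`. -/
def zbc (r : P3) : ℂ := (r.1 : ℂ) - Complex.I * (r.2.1 : ℂ)

/-- The Wirtinger derivative `∂_z = (∂_x − i ∂_y)/2`. -/
def pdz (f : P3 → ℂ) : P3 → ℂ := fun p => (pdx f p - Complex.I * pdy f p) / 2

/-- The Wirtinger derivative `∂_{z̄} = (∂_x + i ∂_y)/2`. -/
def pdzbar (f : P3 → ℂ) : P3 → ℂ := fun p => (pdx f p + Complex.I * pdy f p) / 2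

/-- The physicists' Hermite polynomial `H_k(q) = (−1)^k e^{q²} (d/dq)^k e^{−q²}`. -/
def hermiteP (k : ℕ) (q : ℝ) : ℝ :=
  (-1 : ℝ) ^ k * Real.exp (q ^ 2) * (deriv^[k] fun t : ℝ => Real.exp (-t ^ 2)) q

/-- The `k`-th Hermite function `ψ_k(q) = (2^k k! √π)^{−1/2} e^{−q²/2} H_k(q)`. -/
def psiH (k : ℕ) (q : ℝ) : ℝ :=
  (Real.sqrt (2 ^ k * (Nat.factorial k : ℝ) * Real.sqrt Real.pi))⁻¹ *
    Real.exp (-q ^ 2 / 2) * hermiteP k q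

/-- The double factorial `m!!` of an integer, with the convention `m!! = 1` for `m ≤ 0`
(in particular `(−1)!! = 1`). -/
def dfac (m : ℤ) : ℝ := if m ≤ 0 then 1 else (Nat.doubleFactorial m.toNat : ℝ)

/-- The even basis element
`s_{e,k}^h = Σ_p √((2k+2p−1)!!/(2k+2p)!!) binom(h,p) ψ_{2k+2p}(q) z̄^{h−p} z^p`, where
the sum runs over `max(0, −k) ≤ p ≤ h` (i.e. over `0 ≤ p ≤ h` if `k ≥ 0`, and over
`|k| ≤ p ≤ h` if `−h ≤ k ≤ −1`). -/
def sE (h : ℕ) (k : ℤ) : P3 → ℂ := fun r =>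
  ∑ p ∈ Finset.Icc (-k).toNat h,
    (Real.sqrt (dfac (2 * k + 2 * (p : ℤ) - 1) / dfac (2 * k + 2 * (p : ℤ))) : ℂ) *
      (h.choose p : ℂ) * (psiH (2 * k + 2 * (p : ℤ)).toNat r.2.2 : ℂ) *
        (zbc r) ^ (h - p) * (zc r) ^ p

/-- The odd basis element
`s_{o,k}^h = Σ_{p=0}^h √((2k+2p)!!/(2k+2p+1)!!) binom(h,p) ψ_{2k+2p+1}(q) z̄^{h−p} z^p`. -/
def sO (h k : ℕ) : P3 → ℂ := fun r =>
  ∑ p ∈ Finset.range (h + 1),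
    (Real.sqrt ((Nat.doubleFactorial (2 * k + 2 * p) : ℝ) /
        (Nat.doubleFactorial (2 * k + 2 * p + 1) : ℝ)) : ℂ) *
      (h.choose p : ℂ) * (psiH (2 * k + 2 * p + 1) r.2.2 : ℂ) *
        (zbc r) ^ (h - p) * (zc r) ^ p

/-!
Write `D_s = -(q + ∂_q) ∂_z + (q - ∂_q) ∂_{z̄}`. On a term `ψ_m(q) z̄ᵃ zᵇ` the Wirtinger
derivatives lower one exponent, and the ladder relations `(q - ∂_q) ψ_m = √(2m+2) ψ_{m+1}`,
`(q + ∂_q) ψ_m = √(2m) ψ_{m-1}` move the Hermite index. Since the index grows by `2` with `p`,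
the `∂_{z̄}`-part of the `p`-th summand and the `∂_z`-part of the `(p+1)`-st are both multiples
of `ψ_{m+1}(q) z̄^{h-p-1} z^p`, and the weights `√((m-1)!!/m!!) binom(h,p)` make them cancel.
The sum telescopes to its two boundary terms, which vanish: at the top `z̄⁰` is killed by `∂_{z̄}`,
at the bottom either `z⁰` is killed by `∂_z` or `m = 0` and the lowering factor is `√0`.
-/

section Hermite

open Polynomial

/-- Physicists' Hermite polynomials (Mathlib's `Polynomial.hermite` is the probabilists' family). -/
def physHermite : ℕ → ℝ[X]
  | 0 => 1
  | n + 1 => 2 * X * physHermite n - derivative (physHermite n)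

theorem physHermite_succ (n : ℕ) :
    physHermite (n + 1) = 2 * X * physHermite n - derivative (physHermite n) := rfl

theorem derivative_physHermite_succ (n : ℕ) :
    derivative (physHermite (n + 1)) = (2 * n + 2) * physHermite n := by
  induction n with
  | zero => simp [physHermite]
  | succ n ih =>
    rw [physHermite_succ (n + 1), derivative_sub]
    simp only [derivative_mul, derivative_ofNat, derivative_X, derivative_add,
      derivative_natCast, ih]
    rw [physHermite_succ n]
    push_cast
    ring

theorem hasDerivAt_gaussian (t : ℝ) :
    HasDerivAt (fun s : ℝ => Real.exp (-s ^ 2)) (-2 * t * Real.exp (-t ^ 2)) t := by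
  convert ((hasDerivAt_pow 2 t).fun_neg).exp using 1
  push_cast
  ring

theorem iterate_deriv_gaussian (k : ℕ) :
    deriv^[k] (fun t : ℝ => Real.exp (-t ^ 2)) =
      fun t => (-1) ^ k * (physHermite k).eval t * Real.exp (-t ^ 2) := by
  induction k with
  | zero => funext t; simp [physHermite]
  | succ k ih =>
    funext t
    rw [Function.iterate_succ_apply', ih]
    refine ((((physHermite k).hasDerivAt t).const_mul _).mul (hasDerivAt_gaussian t)).deriv.trans ?_
    simp only [physHermite_succ, eval_sub, eval_mul, eval_ofNat, eval_X]
    ring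

theorem hermiteP_eq_eval (k : ℕ) (q : ℝ) : hermiteP k q = (physHermite k).eval q := by
  rw [hermiteP, iterate_deriv_gaussian]
  have hexp : Real.exp (q ^ 2) * Real.exp (-q ^ 2) = 1 := by rw [← Real.exp_add]; simp
  have hsign : ((-1 : ℝ) ^ k) ^ 2 = 1 := by rw [← pow_mul, mul_comm, pow_mul]; simp
  linear_combination (physHermite k).eval q * ((-1) ^ k) ^ 2 * hexp + (physHermite k).eval q * hsign

def hermiteNorm (k : ℕ) : ℝ := (√(2 ^ k * (k.factorial : ℝ) * √Real.pi))⁻¹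

theorem psiH_eq (k : ℕ) (q : ℝ) :
    psiH k q = hermiteNorm k * Real.exp (-q ^ 2 / 2) * (physHermite k).eval q := by
  rw [psiH, hermiteP_eq_eval, hermiteNorm]

theorem hermiteNorm_eq_sqrt_mul_succ (k : ℕ) :
    hermiteNorm k = √(2 * k + 2) * hermiteNorm (k + 1) := by
  have hsucc : 2 ^ (k + 1) * ((k + 1).factorial : ℝ) * √Real.pi
      = (2 * k + 2) * (2 ^ k * (k.factorial : ℝ) * √Real.pi) := by
    push_cast [Nat.factorial_succ]; ring
  rw [hermiteNorm, hermiteNorm, hsucc, Real.sqrt_mul (by positivity : (0 : ℝ) ≤ 2 * k + 2),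
    mul_inv, ← mul_assoc, mul_inv_cancel₀ (by positivity), one_mul]

theorem hasDerivAt_psiH (k : ℕ) (q : ℝ) :
    HasDerivAt (psiH k) (q * psiH k q - √(2 * k + 2) * psiH (k + 1) q) q := by
  have hgauss : HasDerivAt (fun t : ℝ => Real.exp (-t ^ 2 / 2)) (-q * Real.exp (-q ^ 2 / 2)) q := by
    convert ((hasDerivAt_pow 2 q).fun_neg.div_const 2).exp using 1
    push_cast
    ring
  rw [show psiH k = fun t => hermiteNorm k * Real.exp (-t ^ 2 / 2) * (physHermite k).eval t from
    funext (psiH_eq k)]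
  refine ((hgauss.const_mul (hermiteNorm k)).mul ((physHermite k).hasDerivAt q)).congr_deriv ?_
  beta_reduce
  rw [psiH_eq, hermiteNorm_eq_sqrt_mul_succ k, physHermite_succ]
  simp only [eval_sub, eval_mul, eval_ofNat, eval_X]
  ring

theorem two_mul_mul_psiH (k : ℕ) (q : ℝ) :
    2 * q * psiH k q = √(2 * k + 2) * psiH (k + 1) q + √(2 * k) * psiH (k - 1) q := by
  cases k with
  | zero =>
    simp [psiH_eq, hermiteNorm_eq_sqrt_mul_succ 0, physHermite]
    ring
  | succ k =>
    have h1 := hermiteNorm_eq_sqrt_mul_succ k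
    have h2 := hermiteNorm_eq_sqrt_mul_succ (k + 1)
    have hsq : √(2 * (k : ℝ) + 2) ^ 2 = 2 * k + 2 := Real.sq_sqrt (by positivity)
    rw [Nat.add_sub_cancel, show √(2 * ((k + 1 : ℕ) : ℝ)) = √(2 * k + 2) by push_cast; ring_nf]
    simp only [psiH_eq, physHermite_succ (k + 1), derivative_physHermite_succ, eval_sub,
      eval_mul, eval_add, eval_ofNat, eval_X, eval_natCast]
    set e := Real.exp (-q ^ 2 / 2)
    linear_combination (2 * q * e * (physHermite (k + 1)).eval q
      - (2 * k + 2) * e * (physHermite k).eval q) * h2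
      - e * (physHermite k).eval q * √(2 * (k : ℝ) + 2) * h1
      - e * (physHermite k).eval q * hermiteNorm (k + 1) * hsq

end Hermite

theorem HasDerivAt.const_mul_pow_mul_pow {u v : ℝ → ℂ} {u' v' : ℂ} {t : ℝ}
    (hu : HasDerivAt u u' t) (hv : HasDerivAt v v' t) (c : ℂ) (a b : ℕ) :
    HasDerivAt (fun s => c * u s ^ a * v s ^ b)
      (c * (a * u t ^ (a - 1) * u' * v t ^ b + b * u t ^ a * v t ^ (b - 1) * v')) t :=
  (((hu.fun_pow a).const_mul c).mul (hv.fun_pow b)).congr_deriv (by ring)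

/-- The Wirtinger form `D_s = -(q + ∂_q) ∂_z + (q - ∂_q) ∂_{z̄}` of the symplectic Dirac operator,
evaluated on a sum of separated monomials `φ(q) z̄ᵃ zᵇ`. -/
theorem Ds_sum_mul_pow {ι : Type*} (s : Finset ι) (φ : ι → ℝ → ℂ) (φ' : ι → ℂ) (a b : ι → ℕ)
    (r : P3) (hφ : ∀ i ∈ s, HasDerivAt (φ i) (φ' i) r.2.2) :
    Ds (fun r => ∑ i ∈ s, φ i r.2.2 * zbc r ^ a i * zc r ^ b i) r =
      ∑ i ∈ s, ((a i : ℂ) * (r.2.2 * φ i r.2.2 - φ' i) * zbc r ^ (a i - 1) * zc r ^ b i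
        - (b i : ℂ) * (r.2.2 * φ i r.2.2 + φ' i) * zbc r ^ a i * zc r ^ (b i - 1)) := by
  obtain ⟨x, y, q⟩ := r
  have hofReal (t : ℝ) : HasDerivAt (fun s : ℝ => (s : ℂ)) 1 t := (hasDerivAt_id t).ofReal_comp
  have hzbc_x : HasDerivAt (fun t => zbc (t, y, q)) 1 x := (hofReal x).sub_const (I * y)
  have hzc_x : HasDerivAt (fun t => zc (t, y, q)) 1 x := (hofReal x).add_const (I * y)
  have hzbc_y : HasDerivAt (fun t => zbc (x, t, q)) (-I) y :=
    (((hofReal y).const_mul I).const_sub (x : ℂ)).congr_deriv (by ring)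
  have hzc_y : HasDerivAt (fun t => zc (x, t, q)) I y :=
    (((hofReal y).const_mul I).const_add (x : ℂ)).congr_deriv (by ring)
  have hpdq : (fun t => pdq (fun r => ∑ i ∈ s, φ i r.2.2 * zbc r ^ a i * zc r ^ b i) (t, y, q))
      = fun t => ∑ i ∈ s, φ' i * zbc (t, y, q) ^ a i * zc (t, y, q) ^ b i :=
    funext fun t => (HasDerivAt.fun_sum fun i hi =>
      ((hφ i hi).mul_const (zbc (t, y, q) ^ a i)).mul_const (zc (t, y, q) ^ b i)).deriv
  have hpdx := HasDerivAt.fun_sum fun i (_ : i ∈ s) =>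
    hzbc_x.const_mul_pow_mul_pow hzc_x (φ' i) (a i) (b i)
  have hpdy := HasDerivAt.fun_sum fun i (_ : i ∈ s) =>
    hzbc_y.const_mul_pow_mul_pow hzc_y (φ i q) (a i) (b i)
  simp only [Ds, pdx, pdy, hpdq, hpdx.deriv, hpdy.deriv, Finset.mul_sum, ← Finset.sum_sub_distrib]
  refine Finset.sum_congr rfl fun i _ => ?_
  linear_combination (q * φ i q) * (b i * zbc (x, y, q) ^ a i * zc (x, y, q) ^ (b i - 1)
    - a i * zbc (x, y, q) ^ (a i - 1) * zc (x, y, q) ^ b i) * I_mul_I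

theorem dfac_pos (m : ℤ) : 0 < dfac m := by
  unfold dfac
  split_ifs
  · exact one_pos
  · exact_mod_cast Nat.doubleFactorial_pos _

theorem dfac_natCast (m : ℕ) : dfac m = m.doubleFactorial := by
  unfold dfac
  split_ifs with hm
  · obtain rfl : m = 0 := by omega
    simp
  · simp

theorem dfac_add_two {m : ℤ} (hm : -1 ≤ m) : dfac (m + 2) = (m + 2) * dfac m := by
  obtain rfl | hm := hm.eq_or_lt
  · norm_num [dfac]
  · lift m to ℕ using by omega
    rw [show (m : ℤ) + 2 = ((m + 2 : ℕ) : ℤ) by push_cast; ring, dfac_natCast, dfac_natCast,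
      Nat.doubleFactorial_add_two]
    push_cast
    ring

def spinorCoeff (h m p : ℕ) : ℝ := √(dfac ((m : ℤ) - 1) / dfac m) * h.choose p

/-- `s_{o,k}^h` for `m p = 2k+2p+1`, `p₀ = 0`; `s_{e,k}^h` for `m p = 2k+2p`, `p₀ = max(0, -k)`. -/
def spinorSum (h p₀ : ℕ) (m : ℕ → ℕ) : P3 → ℂ := fun r =>
  ∑ p ∈ Icc p₀ h, (spinorCoeff h (m p) p : ℂ) * (psiH (m p) r.2.2 : ℂ) * zbc r ^ (h - p) * zc r ^ p

/-- The coefficients are tuned so that lowering the `(p+1)`-st term and raising the `p`-th one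
give the same multiple of `ψ_{m+1}`. -/
theorem spinorCoeff_succ_mul (h m p : ℕ) :
    spinorCoeff h (m + 2) (p + 1) * (p + 1) * √(2 * ((m + 2 : ℕ) : ℝ))
      = spinorCoeff h m p * (h - p : ℕ) * √(2 * m + 2) := by
  have hodd : dfac (((m + 2 : ℕ) : ℤ) - 1) = (m + 1) * dfac ((m : ℤ) - 1) := by
    rw [show ((m + 2 : ℕ) : ℤ) - 1 = ((m : ℤ) - 1) + 2 by push_cast; ring, dfac_add_two (by omega)]
    push_cast
    ring
  have heven : dfac ((m + 2 : ℕ) : ℤ) = (m + 2) * dfac m := by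
    rw [Nat.cast_add, Nat.cast_two, dfac_add_two (by omega)]
    push_cast
    ring
  have hchoose : (h.choose (p + 1) : ℝ) * (p + 1) = h.choose p * (h - p : ℕ) := by
    exact_mod_cast Nat.choose_succ_right_eq h p
  have hA := dfac_pos ((m : ℤ) - 1)
  have hB := dfac_pos m
  simp only [spinorCoeff]
  calc _ = √(dfac (((m + 2 : ℕ) : ℤ) - 1) / dfac ((m + 2 : ℕ) : ℤ)) * √(2 * ((m + 2 : ℕ) : ℝ))
        * ((h.choose (p + 1) : ℝ) * (p + 1)) := by ring
    _ = √(dfac ((m : ℤ) - 1) / dfac m) * √(2 * m + 2) * (h.choose p * (h - p : ℕ)) := by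
      rw [← Real.sqrt_mul (div_pos (dfac_pos _) (dfac_pos _)).le,
        ← Real.sqrt_mul (div_pos hA hB).le, hchoose, hodd, heven]
      congr 2
      push_cast
      field_simp
    _ = _ := by ring

theorem Finset.sum_Icc_sub_telescope {M : Type*} [AddCommGroup M] {a b : ℕ} (hab : a ≤ b)
    (T U : ℕ → M) (hTU : ∀ p ∈ Ico a b, U (p + 1) = T p) :
    ∑ p ∈ Icc a b, (T p - U p) = T b - U a := by
  induction b, hab using Nat.le_induction with
  | base => simp
  | succ b hab ih =>
    rw [Finset.sum_Icc_succ_top (by omega), ih fun p hp => hTU p (by simp at hp ⊢; omega),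
      hTU b (by simp; omega)]
    abel

theorem Ds_spinorSum_eq_zero {h p₀ : ℕ} {m : ℕ → ℕ} (hp₀ : p₀ ≤ h)
    (hm : ∀ p, p₀ ≤ p → m (p + 1) = m p + 2) (hstart : p₀ = 0 ∨ m p₀ = 0) (r : P3) :
    Ds (spinorSum h p₀ m) r = 0 := by
  set q := r.2.2
  set T : ℕ → ℂ := fun p => ((h - p : ℕ) : ℂ)
    * ((spinorCoeff h (m p) p * √(2 * m p + 2) * psiH (m p + 1) q : ℝ) : ℂ)
    * zbc r ^ (h - p - 1) * zc r ^ p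
  set U : ℕ → ℂ := fun p => (p : ℂ)
    * ((spinorCoeff h (m p) p * √(2 * m p) * psiH (m p - 1) q : ℝ) : ℂ)
    * zbc r ^ (h - p) * zc r ^ (p - 1)
  have hladder : Ds (spinorSum h p₀ m) r = ∑ p ∈ Icc p₀ h, (T p - U p) := by
    refine (Ds_sum_mul_pow _ (fun p t => (spinorCoeff h (m p) p : ℂ) * (psiH (m p) t : ℂ))
      (fun p => (spinorCoeff h (m p) p : ℂ)
        * ((q * psiH (m p) q - √(2 * m p + 2) * psiH (m p + 1) q : ℝ) : ℂ))
      (fun p => h - p) id r fun p _ => (hasDerivAt_psiH (m p) q).ofReal_comp.const_mul _).trans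
      (Finset.sum_congr rfl fun p _ => ?_)
    have hrec : (2 * q * psiH (m p) q : ℂ)
        = √(2 * m p + 2) * psiH (m p + 1) q + √(2 * m p) * psiH (m p - 1) q := by
      exact_mod_cast two_mul_mul_psiH (m p) q
    simp only [T, U, id]
    push_cast
    linear_combination (-(p : ℂ) * spinorCoeff h (m p) p * zbc r ^ (h - p) * zc r ^ (p - 1)) * hrec
  have hshift : ∀ p ∈ Ico p₀ h, U (p + 1) = T p := by
    intro p hp
    have hcoeff : ((spinorCoeff h (m p + 2) (p + 1) * (p + 1) * √(2 * ((m p + 2 : ℕ) : ℝ))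
        * psiH (m p + 1) q : ℝ) : ℂ)
        = ((spinorCoeff h (m p) p * (h - p : ℕ) * √(2 * m p + 2) * psiH (m p + 1) q : ℝ) : ℂ) := by
      rw [spinorCoeff_succ_mul]
    simp only [T, U, hm p (Finset.mem_Ico.mp hp).1, Nat.add_sub_cancel, Nat.sub_sub,
      show m p + 2 - 1 = m p + 1 by omega]
    push_cast at hcoeff ⊢
    linear_combination zbc r ^ (h - (p + 1)) * zc r ^ p * hcoeff
  have hT : T h = 0 := by simp [T]
  have hU : U p₀ = 0 := by rcases hstart with h0 | h0 <;> simp [U, h0]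
  rw [hladder, Finset.sum_Icc_sub_telescope hp₀ T U hshift, hT, hU, sub_zero]

theorem sO_eq_spinorSum (h k : ℕ) : sO h k = spinorSum h 0 (fun p => 2 * k + 2 * p + 1) := by
  funext r
  rw [sO, spinorSum, Nat.range_succ_eq_Icc_zero]
  refine Finset.sum_congr rfl fun p _ => ?_
  have hidx : ((2 * k + 2 * p + 1 : ℕ) : ℤ) - 1 = ((2 * k + 2 * p : ℕ) : ℤ) := by push_cast; ring
  rw [spinorCoeff, hidx, dfac_natCast, dfac_natCast]
  push_cast
  ring

theorem sE_eq_spinorSum (h : ℕ) (k : ℤ) :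
    sE h k = spinorSum h (-k).toNat (fun p => (2 * k + 2 * p).toNat) := by
  funext r
  refine Finset.sum_congr rfl fun p hp => ?_
  have hidx : ((2 * k + 2 * p).toNat : ℤ) = 2 * k + 2 * p := by
    rw [Finset.mem_Icc] at hp
    omega
  rw [spinorCoeff, hidx]
  push_cast
  ring

theorem Ds_sO_eq_zero (h k : ℕ) (r : P3) : Ds (sO h k) r = 0 := by
  rw [sO_eq_spinorSum]
  exact Ds_spinorSum_eq_zero (Nat.zero_le h) (fun _ _ => by ring) (Or.inl rfl) r

theorem Ds_sE_eq_zero {h : ℕ} {k : ℤ} (hk : -(h : ℤ) ≤ k) (r : P3) : Ds (sE h k) r = 0 := by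
  rw [sE_eq_spinorSum]
  exact Ds_spinorSum_eq_zero (by omega) (fun _ _ => by omega) (by omega) r

/-- The odd spinors `s_{o,k}^h` (`k ∈ ℕ`) and the even spinors `s_{e,k}^h`
(`k ∈ ℕ`, and `−h ≤ k ≤ −1`) lie in the kernel of the symplectic Dirac operator. -/
theorem basis_monogenic (h : ℕ) :
    (∀ k : ℕ, ∀ p, Ds (sO h k) p = 0) ∧
    (∀ k : ℕ, ∀ p, Ds (sE h (k : ℤ)) p = 0) ∧
    (∀ k : ℤ, -(h : ℤ) ≤ k → k ≤ -1 → ∀ p, Ds (sE h k) p = 0) :=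
  ⟨Ds_sO_eq_zero h, fun _ => Ds_sE_eq_zero (by omega), fun _ hk _ => Ds_sE_eq_zero hk⟩
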